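/- Let E, e : [0,1] × ℝ^m → ℝ^m be smooth time-dependent vector fields, X_t = E_t + e_t, such that E_t(0) = 0 for all t, the differentials satisfy |DE_t(z)| < C for some C > 0 and all (t,z), and sup_t |e_t(z)| = o(|z|) as |z| → ∞. Assume all solutions of ẏ = E_t(y) and of ẋ = X_t(x) exist on [0,1]. If there exist M₀, C₀ > 0 such that every solution y of ẏ = E_t(y) with y(0) = z and |z| > M₀ satisfies |y(1) − z| > C₀|z|, then there exist M₁, C₁ > 0 such that every solution x of ẋ = X_t(x) with x(0) = z and |z| > M₁ satisfies |x(1) − z| > C₁. In particular, the time-1 map of X has no fixed points outside the ball of radius M₁. -/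

import Mathlib

set_option maxHeartbeats 1600000


noncomputable section

/-- Sublinear perturbations create no periodic orbits at infinity:
let `X_t = E_t + e_t` on `ℝ^m`, with `E_t(0) = 0`, `|DE_t(z)| < C`, and
`sup_t |e_t(z)| = o(|z|)` as `|z| → ∞`, all solutions of `ẏ = E_t(y)` and `ẋ = X_t(x)`
existing on `[0,1]`. If there are `M₀, C₀ > 0` with `|y(1) − z| > C₀|z|` for every solution
`y` of `ẏ = E_t(y)` with `y(0) = z`, `|z| > M₀`, then there are `M₁, C₁ > 0` with
`|x(1) − z| > C₁` for every solution `x` of `ẋ = X_t(x)` with `x(0) = z`, `|z| > M₁`. -/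
theorem stmt_7 (m : ℕ)
    (E e : ℝ → EuclideanSpace ℝ (Fin m) → EuclideanSpace ℝ (Fin m))
    (C : ℝ) (hC : 0 < C)
    (hE : ContDiff ℝ (⊤ : ℕ∞) fun p : ℝ × EuclideanSpace ℝ (Fin m) => E p.1 p.2)
    (he : ContDiff ℝ (⊤ : ℕ∞) fun p : ℝ × EuclideanSpace ℝ (Fin m) => e p.1 p.2)
    (hE0 : ∀ t ∈ Set.Icc (0 : ℝ) 1, E t 0 = 0)
    (hDE : ∀ t ∈ Set.Icc (0 : ℝ) 1, ∀ z, ‖fderiv ℝ (E t) z‖ < C)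
    (hsub : ∀ ε > (0 : ℝ), ∃ M > (0 : ℝ), ∀ z : EuclideanSpace ℝ (Fin m),
      M < ‖z‖ → ∀ t ∈ Set.Icc (0 : ℝ) 1, ‖e t z‖ ≤ ε * ‖z‖)
    (hexE : ∀ z : EuclideanSpace ℝ (Fin m),
      ∃ y : ℝ → EuclideanSpace ℝ (Fin m), y 0 = z ∧
        ∀ t ∈ Set.Icc (0 : ℝ) 1, HasDerivWithinAt y (E t (y t)) (Set.Icc (0 : ℝ) 1) t)
    (hexX : ∀ z : EuclideanSpace ℝ (Fin m),
      ∃ x : ℝ → EuclideanSpace ℝ (Fin m), x 0 = z ∧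
        ∀ t ∈ Set.Icc (0 : ℝ) 1,
          HasDerivWithinAt x (E t (x t) + e t (x t)) (Set.Icc (0 : ℝ) 1) t)
    (M₀ C₀ : ℝ) (hM₀ : 0 < M₀) (hC₀ : 0 < C₀)
    (hlower : ∀ (z : EuclideanSpace ℝ (Fin m)) (y : ℝ → EuclideanSpace ℝ (Fin m)),
      M₀ < ‖z‖ → y 0 = z →
      (∀ t ∈ Set.Icc (0 : ℝ) 1, HasDerivWithinAt y (E t (y t)) (Set.Icc (0 : ℝ) 1) t) →
      C₀ * ‖z‖ < ‖y 1 - z‖) :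
    ∃ M₁ > (0 : ℝ), ∃ C₁ > (0 : ℝ),
      ∀ (z : EuclideanSpace ℝ (Fin m)) (x : ℝ → EuclideanSpace ℝ (Fin m)),
        M₁ < ‖z‖ → x 0 = z →
        (∀ t ∈ Set.Icc (0 : ℝ) 1,
          HasDerivWithinAt x (E t (x t) + e t (x t)) (Set.Icc (0 : ℝ) 1) t) →
        C₁ < ‖x 1 - z‖ := by
  classical
  -- differentiability of E t
  have hEdiff : ∀ t : ℝ, Differentiable ℝ (E t) := by
    intro t
    have h1 : Differentiable ℝ (fun p : ℝ × EuclideanSpace ℝ (Fin m) => E p.1 p.2) :=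
      hE.differentiable (by simp)
    exact h1.comp ((differentiable_const t).prodMk differentiable_id)
  -- Lipschitz of E t
  have hlip : ∀ t ∈ Set.Icc (0:ℝ) 1, LipschitzWith C.toNNReal (E t) := by
    intro t ht
    refine lipschitzWith_of_nnnorm_fderiv_le (hEdiff t) (fun z => ?_)
    rw [← norm_toNNReal]
    exact Real.toNNReal_mono (hDE t ht z).le
  have hCnn : (C.toNNReal : ℝ) = C := Real.coe_toNNReal _ hC.le
  -- linear growth bound for E
  have hEbound : ∀ t ∈ Set.Icc (0:ℝ) 1, ∀ w : EuclideanSpace ℝ (Fin m), ‖E t w‖ ≤ C * ‖w‖ := by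
    intro t ht w
    have h1 := (hlip t ht).dist_le_mul w 0
    rw [hE0 t ht, dist_zero_right, dist_zero_right, hCnn] at h1
    exact h1
  -- choose ε
  have hexpC : (1:ℝ) < Real.exp C := by
    have := Real.add_one_lt_exp (x := C) hC.ne'
    linarith
  have hX : (0:ℝ) < Real.exp (C+1) * (Real.exp C - 1) := by
    have := Real.exp_pos (C+1); nlinarith
  obtain ⟨ε, hε, hε1, hεle⟩ : ∃ ε : ℝ, 0 < ε ∧ ε ≤ 1 ∧
      ε * (Real.exp (C+1) * (Real.exp C - 1)) ≤ C₀ * C / 2 := by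
    refine ⟨min 1 (C₀ * C / (2 * (Real.exp (C+1) * (Real.exp C - 1)))),
      lt_min one_pos (div_pos (mul_pos hC₀ hC) (by linarith)), min_le_left _ _, ?_⟩
    have h2 : min 1 (C₀ * C / (2 * (Real.exp (C+1) * (Real.exp C - 1))))
        ≤ C₀ * C / (2 * (Real.exp (C+1) * (Real.exp C - 1))) := min_le_right _ _
    calc min 1 (C₀ * C / (2 * (Real.exp (C+1) * (Real.exp C - 1))))
            * (Real.exp (C+1) * (Real.exp C - 1))
        ≤ (C₀ * C / (2 * (Real.exp (C+1) * (Real.exp C - 1))))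
            * (Real.exp (C+1) * (Real.exp C - 1)) :=
          mul_le_mul_of_nonneg_right h2 hX.le
      _ = C₀ * C / 2 := by rw [div_mul_eq_mul_div, mul_div_mul_right _ _ hX.ne']
  -- sublinearity threshold
  obtain ⟨Mₑ, hMₑ, hMe⟩ := hsub ε hε
  -- bound for e on compact region
  obtain ⟨K₀, hK₀⟩ := ((isCompact_Icc (a := (0:ℝ)) (b := 1)).prod
      (isCompact_closedBall (0:EuclideanSpace ℝ (Fin m)) Mₑ)).exists_bound_of_continuousOn
      (he.continuous.continuousOn
        (s := Set.Icc (0:ℝ) 1 ×ˢ Metric.closedBall (0:EuclideanSpace ℝ (Fin m)) Mₑ))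
  obtain ⟨K, hK, hKb⟩ : ∃ K : ℝ, 0 ≤ K ∧ ∀ p ∈ Set.Icc (0:ℝ) 1 ×ˢ
      Metric.closedBall (0:EuclideanSpace ℝ (Fin m)) Mₑ, ‖e p.1 p.2‖ ≤ K :=
    ⟨max K₀ 0, le_max_right _ _, fun p hp => le_trans (hK₀ p hp) (le_max_left _ _)⟩
  clear hK₀
  have hebound : ∀ t ∈ Set.Icc (0:ℝ) 1, ∀ w : EuclideanSpace ℝ (Fin m),
      ‖e t w‖ ≤ ε * ‖w‖ + K := by
    intro t ht w
    by_cases hw : Mₑ < ‖w‖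
    · have h1 := hMe w hw t ht
      linarith
    · push_neg at hw
      have h2 : ‖e t w‖ ≤ K := hKb (t, w) ⟨ht, by simpa [Metric.mem_closedBall, dist_zero_right] using hw⟩
      have hεw : 0 ≤ ε * ‖w‖ := by positivity
      linarith
  -- constants
  obtain ⟨B₀, hB₀, hB₀def⟩ : ∃ B₀ : ℝ, 0 ≤ B₀ ∧
      B₀ = ((K/C) * Real.exp (C+1) + K) * (Real.exp C - 1)/C := by
    refine ⟨_, ?_, rfl⟩
    apply div_nonneg _ hC.le
    apply mul_nonneg _ (by linarith)
    positivity
  refine ⟨max (max M₀ 1) (2*(B₀+1)/C₀),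
    lt_of_lt_of_le one_pos (le_trans (le_max_right M₀ 1) (le_max_left _ _)), 1, one_pos, ?_⟩
  intro z x hzM hx0 hx
  have hz1 : (1:ℝ) < ‖z‖ := lt_of_le_of_lt (le_trans (le_max_right _ _) (le_max_left _ _)) hzM
  have hz0 : (0:ℝ) < ‖z‖ := by linarith
  have hzM₀ : M₀ < ‖z‖ := lt_of_le_of_lt (le_trans (le_max_left _ _) (le_max_left _ _)) hzM
  have hzB : 2*(B₀+1)/C₀ < ‖z‖ := lt_of_le_of_lt (le_max_right _ _) hzM
  -- continuity of x
  have hxc : ContinuousOn x (Set.Icc (0:ℝ) 1) := fun t ht => (hx t ht).continuousWithinAt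
  -- derivative within Ici
  have hIci : ∀ (f : ℝ → EuclideanSpace ℝ (Fin m)) (v : ℝ → EuclideanSpace ℝ (Fin m)),
      (∀ t ∈ Set.Icc (0:ℝ) 1, HasDerivWithinAt f (v t) (Set.Icc (0:ℝ) 1) t) →
      ∀ t ∈ Set.Ico (0:ℝ) 1, HasDerivWithinAt f (v t) (Set.Ici t) t := by
    intro f v hf t ht
    refine (hf t ⟨ht.1, ht.2.le⟩).mono_of_mem_nhdsWithin ?_
    refine Filter.mem_of_superset (Filter.inter_mem self_mem_nhdsWithin
      (mem_nhdsWithin_of_mem_nhds (Iio_mem_nhds ht.2))) ?_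
    rintro s ⟨hs1, hs2⟩
    exact ⟨le_trans ht.1 hs1, le_of_lt hs2⟩
  -- a priori bound on x
  set R : ℝ := (‖z‖ + K/C) * Real.exp (C+1) with hRdef
  have hxR : ∀ t ∈ Set.Icc (0:ℝ) 1, ‖x t‖ ≤ R := by
    intro t ht
    have hgb := norm_le_gronwallBound_of_norm_deriv_right_le (f := x)
      (f' := fun t => E t (x t) + e t (x t)) (δ := ‖z‖) (K := C + ε) (ε := K)
      (a := 0) (b := 1) hxc (hIci _ _ hx)
      (by rw [hx0]) ?_ t ht
    · refine le_trans hgb ?_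
      rw [gronwallBound_of_K_ne_0 (by positivity)]
      have ht0 : (0:ℝ) ≤ t - 0 := by simpa using ht.1
      have ht1 : t - 0 ≤ 1 := by simpa using ht.2
      have hexple : Real.exp ((C+ε) * (t - 0)) ≤ Real.exp (C+1) := by
        apply Real.exp_le_exp.2
        have h3 : (C+ε) * (t-0) ≤ (C+ε) * 1 := mul_le_mul_of_nonneg_left ht1 (by positivity)
        linarith
      have hexp1 : (1:ℝ) ≤ Real.exp ((C+ε) * (t - 0)) := by
        rw [← Real.exp_zero]; exact Real.exp_le_exp.2 (by positivity)
      have hdivle : K / (C+ε) ≤ K / C := by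
        apply div_le_div_of_nonneg_left hK hC; linarith
      have h1 : ‖z‖ * Real.exp ((C+ε) * (t - 0)) ≤ ‖z‖ * Real.exp (C+1) :=
        mul_le_mul_of_nonneg_left hexple hz0.le
      have h2 : K / (C+ε) * (Real.exp ((C+ε) * (t - 0)) - 1) ≤ K / C * Real.exp (C+1) := by
        have hd0 : (0:ℝ) ≤ K / (C+ε) := by positivity
        have h4 : Real.exp ((C+ε) * (t - 0)) - 1 ≤ Real.exp (C+1) := by linarith
        calc K / (C+ε) * (Real.exp ((C+ε) * (t - 0)) - 1)
            ≤ K / (C+ε) * Real.exp (C+1) := mul_le_mul_of_nonneg_left h4 hd0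
          _ ≤ K / C * Real.exp (C+1) := mul_le_mul_of_nonneg_right hdivle (by positivity)
      rw [hRdef]; nlinarith
    · intro s hs
      have hs1 : s ∈ Set.Icc (0:ℝ) 1 := ⟨hs.1, hs.2.le⟩
      have h1 := hEbound s hs1 (x s)
      have h2 := hebound s hs1 (x s)
      calc ‖E s (x s) + e s (x s)‖ ≤ ‖E s (x s)‖ + ‖e s (x s)‖ := norm_add_le _ _
        _ ≤ C * ‖x s‖ + (ε * ‖x s‖ + K) := add_le_add h1 h2
        _ = (C + ε) * ‖x s‖ + K := by ring
  have hR0 : (0:ℝ) ≤ R := by rw [hRdef]; positivity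
  -- comparison solution y
  obtain ⟨y, hy0, hy⟩ := hexE z
  have hyc : ContinuousOn y (Set.Icc (0:ℝ) 1) := fun t ht => (hy t ht).continuousWithinAt
  -- the extended vector field
  set v : ℝ → EuclideanSpace ℝ (Fin m) → EuclideanSpace ℝ (Fin m) :=
    fun t => E (min (max t 0) 1) with hvdef
  have hvlip : ∀ t, LipschitzWith C.toNNReal (v t) := by
    intro t
    exact hlip _ ⟨le_min (le_max_right t 0) zero_le_one, min_le_right _ _⟩
  have hveq : ∀ t ∈ Set.Ico (0:ℝ) 1, v t = E t := by
    intro t ht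
    rw [hvdef]
    simp only [max_eq_left ht.1, min_eq_left ht.2.le]
  -- Gronwall comparison
  have hcomp := dist_le_of_approx_trajectories_ODE (v := v) (K := C.toNNReal) hvlip
    (f := x) (f' := fun t => E t (x t) + e t (x t)) (εf := ε * R + K)
    (g := y) (g' := fun t => E t (y t)) (εg := 0) (δ := 0) (a := 0) (b := 1)
    hxc (hIci _ _ hx) ?_ hyc (hIci _ _ hy) ?_ (by rw [hx0, hy0]; simp) 1
    (by norm_num)
  · -- final arithmetic
    have hgb1 : dist (x 1) (y 1) ≤ (ε * R + K) / C * (Real.exp C - 1) := by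
      refine le_trans hcomp ?_
      rw [add_zero, gronwallBound_of_K_ne_0 (by rw [hCnn]; exact hC.ne'), hCnn]
      norm_num
    have hylow := hlower z y hzM₀ hy0 hy
    have htri : ‖y 1 - z‖ ≤ dist (x 1) (y 1) + ‖x 1 - z‖ := by
      rw [dist_eq_norm]
      calc ‖y 1 - z‖ = ‖(y 1 - x 1) + (x 1 - z)‖ := by abel_nf
        _ ≤ ‖y 1 - x 1‖ + ‖x 1 - z‖ := norm_add_le _ _
        _ = ‖x 1 - y 1‖ + ‖x 1 - z‖ := by rw [norm_sub_rev]
    -- bound the error term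
    have hkey : (ε * R + K) / C * (Real.exp C - 1) ≤ C₀ * ‖z‖ / 2 + B₀ := by
      have hexpand : (ε * R + K) / C * (Real.exp C - 1)
          = (ε * (Real.exp (C+1) * (Real.exp C - 1)) / C) * ‖z‖
            + (ε * (K/C) * Real.exp (C+1) + K) * (Real.exp C - 1) / C := by
        rw [hRdef]; field_simp; ring
      rw [hexpand]
      have h1 : (ε * (Real.exp (C+1) * (Real.exp C - 1)) / C) * ‖z‖ ≤ C₀ * ‖z‖ / 2 := by
        have h5 : ε * (Real.exp (C+1) * (Real.exp C - 1)) / C ≤ C₀ / 2 := by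
          rw [div_le_div_iff₀ hC (by norm_num : (0:ℝ) < 2)]
          linarith [hεle]
        calc (ε * (Real.exp (C+1) * (Real.exp C - 1)) / C) * ‖z‖ ≤ (C₀/2) * ‖z‖ :=
              mul_le_mul_of_nonneg_right h5 hz0.le
          _ = C₀ * ‖z‖ / 2 := by ring
      have h2 : (ε * (K/C) * Real.exp (C+1) + K) * (Real.exp C - 1) / C ≤ B₀ := by
        rw [hB₀def]
        have hnum : ε * (K/C) * Real.exp (C+1) ≤ (K/C) * Real.exp (C+1) := by
          have h7 : 0 ≤ (K/C) * Real.exp (C+1) :=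
            mul_nonneg (div_nonneg hK hC.le) (Real.exp_pos _).le
          nlinarith [mul_nonneg (sub_nonneg.2 hε1) h7]
        gcongr
      linarith
    have hfin : C₀ * ‖z‖ / 2 > B₀ + 1 := by
      rw [div_lt_iff₀ hC₀] at hzB
      nlinarith
    linarith
  · -- f_bound
    intro t ht
    rw [hveq t ht, dist_eq_norm]
    have h6 : E t (x t) + e t (x t) - E t (x t) = e t (x t) := by abel
    rw [h6]
    have h1 := hebound t ⟨ht.1, ht.2.le⟩ (x t)
    have h2 := hxR t ⟨ht.1, ht.2.le⟩
    nlinarith [hε.le]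
  · -- g_bound
    intro t ht
    rw [hveq t ht, dist_self]
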